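/- Muntyan–Savchuk: let a, b, c be the automorphisms of the rooted binary tree {0,1}* defined recursively by a(0w) = 0·b(w), a(1w) = 1·c(w); b(0w) = 0·c(w), b(1w) = 1·b(w); c(0w) = 1·a(w), c(1w) = 0·a(w). Then the group ⟨a, b, c⟩ ≤ Aut({0,1}*) is isomorphic to the free product ℤ/2 * ℤ/2 * ℤ/2, via the map sending the three free-product generators to a, b, c; in particular a² = b² = c² = 1 and these are the only relations. -/

import Mathlib

/-!
Every state of `E₁` is an involution, so `a² = b² = c² = 1`, and it remains to show that no
nonempty reduced word `w` over `{a, b, c}` (no two equal adjacent letters) acts trivially.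

The section of a reduced word at a vertex is again reduced and of the same length. Conversely,
every reduced word of that length is a section of `w`: the dual automaton acts transitively on
the reduced words of each length. This goes by induction on the length, splitting off the letter
that acts first; the inductive step routes through a periodic reduced word `fixWord` that is its
own section at the vertex `01011`, while that vertex changes the sections of `a` and `c`.
In particular `c a b a b ⋯` is the section of `w` at some vertex `u`. It flips the first letter,
so `w` moves `u0`.
-/

/-- States of the automaton `E₁`. -/
inductive EGen | a | b | c
deriving DecidableEq

/-- The three transformations of `{0,1}*` (with `false = 0`, `true = 1`) computed by
the states of the automaton `E₁`, defined by the mutual recursion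
`a(0w) = 0·b(w), a(1w) = 1·c(w); b(0w) = 0·c(w), b(1w) = 1·b(w);
c(0w) = 1·a(w), c(1w) = 0·a(w)`. -/
def eAut : EGen → List Bool → List Bool
  | _, [] => []
  | .a, false :: w => false :: eAut .b w
  | .a, true :: w => true :: eAut .c w
  | .b, false :: w => false :: eAut .c w
  | .b, true :: w => true :: eAut .b w
  | .c, x :: w => (!x) :: eAut .a w

/-- The relators `x², y², z²` of the free product `ℤ/2 * ℤ/2 * ℤ/2 = ⟨x,y,z ∣ x²,y²,z²⟩`. -/
def freeProdRels : Set (FreeGroup (Fin 3)) :=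
  Set.range fun i : Fin 3 => (FreeGroup.of i) ^ 2

namespace PresentedGroup

variable {ι : Type*} {rels : Set (FreeGroup ι)}

lemma range_toGroup {G : Type*} [Group G] {f : ι → G}
    (hf : ∀ r ∈ rels, FreeGroup.lift f r = 1) :
    (toGroup hf).range = Subgroup.closure (Set.range f) := by
  rw [MonoidHom.range_eq_map, ← closure_range_of, MonoidHom.map_closure, ← Set.range_comp]
  congr 2
  funext i
  exact toGroup.of hf

section Involutions

variable (hsq : ∀ i, FreeGroup.of i ^ 2 ∈ rels)
include hsq

lemma of_mul_of_self (i : ι) : (of i : PresentedGroup rels) * of i = 1 := by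
  rw [← pow_two]
  exact one_of_mem (hsq i)

lemma inv_of (i : ι) : (of i : PresentedGroup rels)⁻¹ = of i :=
  inv_eq_of_mul_eq_one_right (of_mul_of_self hsq i)

lemma exists_map_of_prod_eq (x : PresentedGroup rels) : ∃ L : List ι, (L.map of).prod = x := by
  have hx : x ∈ Subgroup.closure (Set.range of) := by rw [closure_range_of]; trivial
  induction hx using Subgroup.closure_induction with
  | mem _ hx => obtain ⟨i, rfl⟩ := hx; exact ⟨[i], by simp⟩
  | one => exact ⟨[], rfl⟩
  | mul _ _ _ _ hx hy =>
    obtain ⟨L, rfl⟩ := hx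
    obtain ⟨L', rfl⟩ := hy
    exact ⟨L ++ L', by simp⟩
  | inv _ _ hx =>
    obtain ⟨L, rfl⟩ := hx
    exact ⟨L.reverse, by simp [List.prod_inv_reverse, Function.comp_def, inv_of hsq]⟩

/-- A shortest word representing `x` is reduced, since `of i * of i = 1`. -/
lemma exists_isChain_map_of_prod_eq (x : PresentedGroup rels) :
    ∃ L : List ι, L.IsChain (· ≠ ·) ∧ (L.map of).prod = x := by
  classical
  have hex : ∃ n, ∃ L : List ι, L.length = n ∧ (L.map of).prod = x := by
    obtain ⟨L, hL⟩ := exists_map_of_prod_eq hsq x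
    exact ⟨_, L, rfl, hL⟩
  obtain ⟨L, hlen, rfl⟩ := Nat.find_spec hex
  refine ⟨L, List.isChain_iff_forall_rel_of_append_cons_cons.2 fun i j l₁ l₂ hL hij => ?_,
    rfl⟩
  subst hij hL
  refine Nat.find_min hex (m := (l₁ ++ l₂).length) (by rw [← hlen]; simp)
    ⟨l₁ ++ l₂, rfl, ?_⟩
  simp [← mul_assoc, of_mul_of_self hsq]

lemma toGroup_injective_of_isChain {G : Type*} [Group G] {f : ι → G}
    (hf : ∀ r ∈ rels, FreeGroup.lift f r = 1)
    (hred : ∀ L : List ι, L.IsChain (· ≠ ·) → L ≠ [] → (L.map f).prod ≠ 1) :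
    Function.Injective (toGroup hf) := by
  rw [injective_iff_map_eq_one]
  intro x hx
  obtain ⟨L, hL, rfl⟩ := exists_isChain_map_of_prod_eq hsq x
  obtain rfl | hne := eq_or_ne L []
  · rfl
  · refine absurd ?_ (hred L hL hne)
    simpa [map_list_prod, Function.comp_def] using hx

end Involutions

end PresentedGroup

instance : Fintype EGen := ⟨{.a, .b, .c}, fun g => by cases g <;> simp⟩

namespace EGen

def out : EGen → Bool → Bool
  | c, x => !x
  | _, x => x

def next : EGen → Bool → EGen
  | a, false => b
  | a, true => c
  | b, false => c
  | b, true => b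
  | c, _ => a

/-- The section of the state `g` at the vertex `u`. -/
def stateAt (g : EGen) : List Bool → EGen
  | [] => g
  | x :: u => (g.next x).stateAt u

@[simp] lemma eAut_nil (g : EGen) : eAut g [] = [] := by
  cases g <;> rfl

lemma eAut_cons (g : EGen) (x : Bool) (s : List Bool) :
    eAut g (x :: s) = g.out x :: eAut (g.next x) s := by
  cases g <;> cases x <;> rfl

lemma out_out (g : EGen) (x : Bool) : g.out (g.out x) = x := by
  cases g <;> cases x <;> rfl

lemma next_out (g : EGen) (x : Bool) : g.next (g.out x) = g.next x := by
  cases g <;> cases x <;> rfl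

lemma eAut_involutive (g : EGen) : Function.Involutive (eAut g) := by
  intro s
  induction s generalizing g with
  | nil => simp
  | cons x s ih => rw [eAut_cons, eAut_cons, out_out, next_out, ih]

lemma stateAt_eAut (g : EGen) (u : List Bool) : g.stateAt (eAut g u) = g.stateAt u := by
  induction u generalizing g with
  | nil => simp
  | cons x u ih => rw [eAut_cons, stateAt, stateAt, next_out, ih]

lemma next_injective (x : Bool) : Function.Injective (next · x) := by
  cases x <;> decide

lemma stateAt_injective (u : List Bool) : Function.Injective (stateAt · u) := by
  induction u with
  | nil => exact fun _ _ h => h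
  | cons x u ih => exact ih.comp (next_injective x)

lemma next_out_ne_next {g h : EGen} (hgh : g ≠ h) (x : Bool) : g.next (h.out x) ≠ h.next x := by
  revert g h x; decide

lemma exists_stateAt_eq (g h : EGen) : ∃ u, g.stateAt u = h := by
  cases g <;> cases h <;>
    first | exact ⟨[], rfl⟩ | exact ⟨[false], rfl⟩ | exact ⟨[false, false], rfl⟩

lemma eq_or_eq_of_ne {g g' h l : EGen} (hgg' : g ≠ g') (hg : g ≠ l) (hg' : g' ≠ l)
    (hh : h ≠ l) : h = g ∨ h = g' := by
  revert g g' h l; decide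

end EGen

namespace E1

open EGen

/-- The word `[g₁, …, gₙ]` acts as the composite `g₁ ∘ ⋯ ∘ gₙ`. -/
def wordAct (w : List EGen) (s : List Bool) : List Bool := w.foldr eAut s

def wordOut (w : List EGen) (x : Bool) : Bool := w.foldr out x

def wordNext (x : Bool) : List EGen → List EGen
  | [] => []
  | g :: w => g.next (wordOut w x) :: wordNext x w

/-- The section of the word `w` at the vertex `u`. -/
def wordSection : List Bool → List EGen → List EGen
  | [], w => w
  | x :: u, w => wordSection u (wordNext x w)

@[simp] lemma wordAct_nil (s : List Bool) : wordAct [] s = s := rfl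

@[simp] lemma wordAct_cons (g : EGen) (w : List EGen) (s : List Bool) :
    wordAct (g :: w) s = eAut g (wordAct w s) := rfl

lemma wordAct_append (v w : List EGen) (s : List Bool) :
    wordAct (v ++ w) s = wordAct v (wordAct w s) :=
  List.foldr_append

@[simp] lemma wordAct_apply_nil (w : List EGen) : wordAct w [] = [] := by
  induction w with
  | nil => rfl
  | cons g w ih => simp [ih]

lemma wordAct_apply_cons (w : List EGen) (x : Bool) (s : List Bool) :
    wordAct w (x :: s) = wordOut w x :: wordAct (wordNext x w) s := by
  induction w with
  | nil => rfl
  | cons g w ih => rw [wordAct_cons, ih, eAut_cons]; rfl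

lemma wordAct_apply_append (w : List EGen) (u s : List Bool) :
    wordAct w (u ++ s) = wordAct w u ++ wordAct (wordSection u w) s := by
  induction u generalizing w with
  | nil => simp [wordSection]
  | cons x u ih => rw [List.cons_append, wordAct_apply_cons, wordAct_apply_cons, ih]; rfl

lemma wordAct_apply_singleton (w : List EGen) (x : Bool) : wordAct w [x] = [wordOut w x] := by
  rw [wordAct_apply_cons, wordAct_apply_nil]

lemma wordOut_of_not_mem {w : List EGen} (hw : c ∉ w) (x : Bool) : wordOut w x = x := by
  induction w with
  | nil => rfl
  | cons g w ih =>
    obtain ⟨hg, hw'⟩ := not_or.1 (List.mem_cons.not.1 hw)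
    cases g <;> first | exact absurd rfl hg | exact ih hw'

lemma wordSection_path_append (u u' : List Bool) (w : List EGen) :
    wordSection (u ++ u') w = wordSection u' (wordSection u w) := by
  induction u generalizing w with
  | nil => rfl
  | cons x u ih => exact ih _

@[simp] lemma wordSection_nil (u : List Bool) : wordSection u [] = [] := by
  induction u with
  | nil => rfl
  | cons x u ih => exact ih

lemma wordSection_cons (u : List Bool) (g : EGen) (t : List EGen) :
    wordSection u (g :: t) = g.stateAt (wordAct t u) :: wordSection u t := by
  induction u generalizing g t with
  | nil => simp [wordSection, stateAt]
  | cons x u ih => rw [wordSection, wordNext, ih, wordAct_apply_cons]; rfl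

lemma wordSection_append (u : List Bool) (v t : List EGen) :
    wordSection u (v ++ t) = wordSection (wordAct t u) v ++ wordSection u t := by
  induction v with
  | nil => simp
  | cons g v ih => rw [List.cons_append, wordSection_cons, wordSection_cons, ih,
      wordAct_append, List.cons_append]

/-- As `g` is an involution, the vertex `g(u)` passes `u` on to the rest of the word. -/
lemma wordSection_eAut_append_singleton (u : List Bool) (v : List EGen) (g : EGen) :
    wordSection (eAut g u) (v ++ [g]) = wordSection u v ++ [g.stateAt u] := by
  rw [wordSection_append, wordSection_cons, wordSection_nil, wordAct_cons, wordAct_nil,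
    eAut_involutive, stateAt_eAut]

lemma wordSection_singleton (u : List Bool) (g : EGen) : wordSection u [g] = [g.stateAt u] := by
  simp [wordSection_cons]

lemma isChain_wordNext (x : Bool) {w : List EGen} (hw : w.IsChain (· ≠ ·)) :
    (wordNext x w).IsChain (· ≠ ·) := by
  induction w with
  | nil => exact .nil
  | cons g w ih =>
    cases w with
    | nil => exact .singleton _
    | cons h w =>
      obtain ⟨hgh, hw⟩ := List.isChain_cons_cons.1 hw
      exact List.isChain_cons_cons.2 ⟨next_out_ne_next hgh _, ih hw⟩

lemma isChain_wordSection (u : List Bool) {w : List EGen} (hw : w.IsChain (· ≠ ·)) :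
    (wordSection u w).IsChain (· ≠ ·) := by
  induction u generalizing w with
  | nil => exact hw
  | cons x u ih => exact ih (isChain_wordNext x hw)

def HasSection (v w : List EGen) : Prop := ∃ u, wordSection u v = w

lemma HasSection.trans {v w z : List EGen} (hvw : HasSection v w) (hwz : HasSection w z) :
    HasSection v z := by
  obtain ⟨u, rfl⟩ := hvw
  obtain ⟨u', rfl⟩ := hwz
  exact ⟨u ++ u', wordSection_path_append u u' v⟩

lemma HasSection.isChain {v w : List EGen} (h : HasSection v w) (hv : v.IsChain (· ≠ ·)) :
    w.IsChain (· ≠ ·) := by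
  obtain ⟨u, rfl⟩ := h
  exact isChain_wordSection u hv

/-- Every `fixWord n` is its own section at `fixPath = 01011`, while the sections of `a` and `c`
there are other letters. -/
def fixPath : List Bool := [false, true, false, true, true]

def fixLetter : ℕ → EGen
  | 0 => b
  | k + 1 => ![a, b, c, a, c] (Fin.ofNat 5 k)

def fixWord : ℕ → List EGen
  | 0 => []
  | n + 1 => fixLetter n :: fixWord n

/-- After `fixLetter 0 = b`, the letters `fixLetter k` repeat `abcac`; along them the images of
`fixPath` run through the rotations of `00011`. -/
lemma fixLetter_cycle : ∀ i : Fin 5,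
    eAut (![a, b, c, a, c] i) ([false, false, false, true, true].rotate i) =
      ([false, false, false, true, true].rotate i).rotate 1 ∧
    (![a, b, c, a, c] i).stateAt ([false, false, false, true, true].rotate i) =
      ![a, b, c, a, c] i ∧
    ![a, b, c, a, c] (i + 1) ≠ ![a, b, c, a, c] i := by
  decide

lemma fixLetter_succ (k : ℕ) :
    eAut (fixLetter (k + 1)) ([false, false, false, true, true].rotate k) =
      [false, false, false, true, true].rotate (k + 1) ∧
    (fixLetter (k + 1)).stateAt ([false, false, false, true, true].rotate k) =
      fixLetter (k + 1) ∧
    fixLetter (k + 2) ≠ fixLetter (k + 1) := by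
  have h := fixLetter_cycle (Fin.ofNat 5 k)
  have hsucc : Fin.ofNat 5 (k + 1) = Fin.ofNat 5 k + 1 := by
    ext; simp [Fin.val_add, Nat.add_mod]
  rw [Fin.val_ofNat, show k % 5 = k % List.length [false, false, false, true, true] from rfl,
    List.rotate_mod, List.rotate_rotate] at h
  simpa only [fixLetter, hsucc] using h

lemma wordAct_fixWord (k : ℕ) :
    wordAct (fixWord (k + 1)) fixPath = [false, false, false, true, true].rotate k := by
  induction k with
  | zero => decide
  | succ k ih => rw [fixWord, wordAct_cons, ih, (fixLetter_succ k).1]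

lemma wordSection_fixWord (n : ℕ) : wordSection fixPath (fixWord n) = fixWord n := by
  induction n with
  | zero => simp [fixWord]
  | succ n ih =>
    rw [fixWord, wordSection_cons, ih]
    congr
    cases n with
    | zero => decide
    | succ k => rw [wordAct_fixWord, (fixLetter_succ k).2.1]

lemma fixWord_length (n : ℕ) : (fixWord n).length = n := by
  induction n with
  | zero => rfl
  | succ n ih => simp [fixWord, ih]

lemma fixWord_getLast? (n : ℕ) : (fixWord (n + 1)).getLast? = some b := by
  induction n with
  | zero => rfl
  | succ n ih => rw [fixWord, List.getLast?_cons, ih]; rfl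

lemma isChain_fixWord (n : ℕ) : (fixWord n).IsChain (· ≠ ·) := by
  induction n with
  | zero => exact .nil
  | succ n ih =>
    cases n with
    | zero => exact .singleton _
    | succ k =>
      refine List.isChain_cons_cons.2 ⟨?_, ih⟩
      cases k with
      | zero => decide
      | succ j => exact (fixLetter_succ j).2.2

lemma stateAt_fixPath_ne {g : EGen} (hg : g ≠ b) : g.stateAt fixPath ≠ g := by
  revert g; decide

lemma hasSection_singleton (g h : EGen) : HasSection [g] [h] := by
  obtain ⟨u, hu⟩ := exists_stateAt_eq g h
  exact ⟨u, by rw [wordSection_singleton, hu]⟩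

lemma hasSection_eAut_append_singleton {p q : List EGen} {u : List Bool}
    (hu : wordSection u p = q) (g : EGen) : HasSection (p ++ [g]) (q ++ [g.stateAt u]) :=
  ⟨eAut g u, by rw [wordSection_eAut_append_singleton, hu]⟩

/-- Passing through `fixWord (n + 1)`, the word `p ++ [g]` has sections `q ++ [h₁]` and
`q ++ [h₂]` with `h₁ ≠ h₂`; like `h`, both differ from the last letter of `q`. -/
lemma hasSection_append_singleton {n : ℕ}
    (ih : ∀ v w : List EGen, v.IsChain (· ≠ ·) → w.IsChain (· ≠ ·) →
      v.length = n + 1 → w.length = n + 1 → HasSection v w)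
    {p q : List EGen} {g h : EGen} (hpg : (p ++ [g]).IsChain (· ≠ ·))
    (hqh : (q ++ [h]).IsChain (· ≠ ·)) (hp : p.length = n + 1) (hq : q.length = n + 1) :
    HasSection (p ++ [g]) (q ++ [h]) := by
  have hp' := (List.isChain_append.1 hpg).1
  have hq' := (List.isChain_append.1 hqh).1
  obtain ⟨u₁, hu₁⟩ := ih p (fixWord (n + 1)) hp' (isChain_fixWord _) hp (fixWord_length _)
  obtain ⟨u₃, hu₃⟩ := ih (fixWord (n + 1)) q (isChain_fixWord _) hq' (fixWord_length _) hq
  set g₂ := g.stateAt u₁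
  have h₁ := hasSection_eAut_append_singleton hu₁ g
  have hg₂ : g₂ ≠ b := fun h => (List.isChain_append.1 (h₁.isChain hpg)).2.2 b
    (fixWord_getLast? n) g₂ rfl h.symm
  have hA := h₁.trans (hasSection_eAut_append_singleton hu₃ g₂)
  have hB := (h₁.trans (hasSection_eAut_append_singleton (wordSection_fixWord _) g₂)).trans
    (hasSection_eAut_append_singleton hu₃ _)
  have hl := List.getLast?_eq_some_getLast (List.ne_nil_of_length_eq_add_one hq)
  have ne_last : ∀ {h'}, (q ++ [h']).IsChain (· ≠ ·) → h' ≠ q.getLast _ :=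
    fun hch heq => (List.isChain_append.1 hch).2.2 _ hl _ rfl heq.symm
  rcases eq_or_eq_of_ne ((stateAt_injective u₃).ne (stateAt_fixPath_ne hg₂).symm)
    (ne_last (hA.isChain hpg)) (ne_last (hB.isChain hpg)) (ne_last hqh) with rfl | rfl
  exacts [hA, hB]

theorem hasSection_of_isChain : ∀ {n : ℕ} {v w : List EGen}, v.IsChain (· ≠ ·) →
    w.IsChain (· ≠ ·) → v.length = n → w.length = n → HasSection v w
  | 0, v, w, _, _, hv, hw => by
    rw [List.length_eq_zero_iff.1 hv, List.length_eq_zero_iff.1 hw]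
    exact ⟨[], rfl⟩
  | 1, v, w, _, _, hv, hw => by
    obtain ⟨g, rfl⟩ := List.length_eq_one_iff.1 hv
    obtain ⟨h, rfl⟩ := List.length_eq_one_iff.1 hw
    exact hasSection_singleton g h
  | n + 2, v, w, hv, hw, hvl, hwl => by
    rcases v.eq_nil_or_concat' with rfl | ⟨p, g, rfl⟩
    · simp at hvl
    rcases w.eq_nil_or_concat' with rfl | ⟨q, h, rfl⟩
    · simp at hwl
    exact hasSection_append_singleton (fun _ _ => hasSection_of_isChain) hv hw
      (by simpa using hvl) (by simpa using hwl)

def flipWord (n : ℕ) : List EGen := c :: (List.range n).map fun i => if Even i then a else b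

lemma flipWord_length (n : ℕ) : (flipWord n).length = n + 1 := by
  simp [flipWord]

lemma isChain_flipWord (n : ℕ) : (flipWord n).IsChain (· ≠ ·) := by
  refine List.isChain_cons.2 ⟨fun g hg => ?_, ?_⟩
  · cases n <;> simp [List.range_succ_eq_map] at hg
    exact hg ▸ nofun
  · rw [List.isChain_map, List.isChain_range]
    intro i _
    by_cases hi : Even i <;> simp [hi, Nat.even_add_one]

lemma wordOut_flipWord (n : ℕ) (x : Bool) : wordOut (flipWord n) x = !x := by
  rw [flipWord, wordOut, List.foldr_cons, ← wordOut, wordOut_of_not_mem]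
  · rfl
  · simp only [List.mem_map, List.mem_range, not_exists, not_and]
    intro i _
    split <;> decide

theorem exists_wordAct_ne {w : List EGen} (hw : w.IsChain (· ≠ ·)) (hne : w ≠ []) :
    ∃ s, wordAct w s ≠ s := by
  obtain ⟨n, hn⟩ := Nat.exists_eq_add_one_of_ne_zero ((List.length_pos_iff.2 hne).ne')
  obtain ⟨u, hu⟩ := hasSection_of_isChain hw (isChain_flipWord n) hn (flipWord_length n)
  refine ⟨u ++ [false], fun h => ?_⟩
  rw [wordAct_apply_append, hu, wordAct_apply_singleton, wordOut_flipWord] at h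
  simpa using List.append_inj_right' h rfl

def perm (g : EGen) : Equiv.Perm (List Bool) := (eAut_involutive g).toPerm

lemma perm_mul_self (g : EGen) : perm g * perm g = 1 :=
  Equiv.ext (eAut_involutive g)

lemma coe_prod_map_perm (w : List EGen) : ⇑(w.map perm).prod = wordAct w := by
  induction w with
  | nil => rfl
  | cons g w ih => ext1 s; simp [ih, perm]

def gen : Fin 3 → EGen := ![a, b, c]

lemma gen_injective : Function.Injective gen := by
  decide

lemma sq_mem_freeProdRels (i : Fin 3) : FreeGroup.of i ^ 2 ∈ freeProdRels := ⟨i, rfl⟩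

lemma lift_eq_one_of_mem_freeProdRels :
    ∀ r ∈ freeProdRels, FreeGroup.lift (perm ∘ gen) r = 1 := by
  rintro _ ⟨i, rfl⟩
  simp [pow_two, perm_mul_self]

lemma prod_map_perm_ne_one {L : List (Fin 3)} (hL : L.IsChain (· ≠ ·)) (hne : L ≠ []) :
    (L.map (perm ∘ gen)).prod ≠ 1 := by
  intro h
  have hred : (L.map gen).IsChain (· ≠ ·) :=
    (List.isChain_map gen).2 (hL.imp fun _ _ => gen_injective.ne)
  obtain ⟨s, hs⟩ := exists_wordAct_ne hred (by simpa using hne)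
  rw [← coe_prod_map_perm, List.map_map, h] at hs
  exact hs rfl

lemma range_toGroup_eq_closure : (PresentedGroup.toGroup lift_eq_one_of_mem_freeProdRels).range =
    Subgroup.closure {perm a, perm b, perm c} := by
  rw [PresentedGroup.range_toGroup]
  congr 1
  ext
  simp only [Set.mem_range, Function.comp_apply, Fin.exists_fin_succ, Fin.exists_fin_zero,
    Set.mem_insert_iff, Set.mem_singleton_iff]
  simp [gen, eq_comm]

end E1

/-- Muntyan–Savchuk: the group `⟨a, b, c⟩ ≤ Aut({0,1}*)` generated by the three
states of the automaton `E₁` is isomorphic to the free product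
`ℤ/2 * ℤ/2 * ℤ/2 = ⟨x, y, z ∣ x², y², z²⟩`, via the isomorphism sending the three
free-product generators to `a`, `b`, `c` respectively; in particular
`a² = b² = c² = 1` and these are the only relations. -/
theorem e1_group_free_product :
    ∃ pa pb pc : Equiv.Perm (List Bool),
      ⇑pa = eAut .a ∧ ⇑pb = eAut .b ∧ ⇑pc = eAut .c ∧
      ∃ φ : PresentedGroup freeProdRels ≃*
          (Subgroup.closure {pa, pb, pc} : Subgroup (Equiv.Perm (List Bool))),
        ((φ (PresentedGroup.of 0) : Equiv.Perm (List Bool)) = pa ∧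
         (φ (PresentedGroup.of 1) : Equiv.Perm (List Bool)) = pb ∧
         (φ (PresentedGroup.of 2) : Equiv.Perm (List Bool)) = pc) := by
  have hinj := PresentedGroup.toGroup_injective_of_isChain E1.sq_mem_freeProdRels
    E1.lift_eq_one_of_mem_freeProdRels fun _ => E1.prod_map_perm_ne_one
  exact ⟨E1.perm .a, E1.perm .b, E1.perm .c, rfl, rfl, rfl,
    (MonoidHom.ofInjective hinj).trans (MulEquiv.subgroupCongr E1.range_toGroup_eq_closure),
    rfl, rfl, rfl⟩
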